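/- Knight-type identity for loss differences: for real numbers u, a, b, ℓ_α(u − a − b) − ℓ_α(u − a) = 2 ∫_a^{a+b} (1{u ≤ t} − 1{u ≤ 0}) dt − 2(α − 1{u ≤ 0}) b. Equivalently, ℓ_α(u − a − b) − ℓ_α(u − a) − 2(1{u ≤ 0} − α) b = 2 ∫_a^{a+b} (1{u ≤ t} − 1{u ≤ 0}) dt. -/

import Mathlib

/-!
The right derivative of `s ↦ max s u` is `1{u ≤ s}` at every point, so the fundamental theorem
of calculus gives `∫_a^c 1{u ≤ t} dt = max c u - max a u`. Since `|u - x| = 2 max x u - x - u`,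
both sides of the identity are then the same linear expression in these maxima.
-/

open intervalIntegral Set

lemma monotone_step (u : ℝ) : Monotone fun t : ℝ => if u ≤ t then (1:ℝ) else 0 := by
  intro s t hst
  by_cases hus : u ≤ s
  · simp [hus, hus.trans hst]
  · simp only [hus, if_false]
    split_ifs <;> norm_num

lemma hasDerivWithinAt_max_const_Ioi (u t : ℝ) :
    HasDerivWithinAt (fun s => max s u) (if u ≤ t then 1 else 0) (Ioi t) t := by
  split_ifs with hut
  · refine (hasDerivWithinAt_id t _).congr_of_eventuallyEq ?_ (max_eq_left hut)
    filter_upwards [self_mem_nhdsWithin] with s hs using max_eq_left (hut.trans (le_of_lt hs))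
  · have hlt : t < u := lt_of_not_ge hut
    refine ((hasDerivAt_const t u).hasDerivWithinAt).congr_of_eventuallyEq ?_ (max_eq_right hlt.le)
    filter_upwards [nhdsWithin_le_nhds (Iio_mem_nhds hlt)] with s hs using max_eq_right (le_of_lt hs)

lemma integral_step (u a c : ℝ) :
    ∫ t in a..c, (if u ≤ t then (1:ℝ) else 0) = max c u - max a u :=
  integral_eq_sub_of_hasDeriv_right (continuous_id.max continuous_const).continuousOn
    (fun t _ => hasDerivWithinAt_max_const_Ioi u t) (monotone_step u).intervalIntegrable

lemma abs_sub_eq_two_mul_max_sub (x u : ℝ) : |u - x| = 2 * max x u - x - u := by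
  rcases le_total x u with h | h
  · rw [abs_of_nonneg (sub_nonneg.2 h), max_eq_right h]; ring
  · rw [abs_of_nonpos (sub_nonpos.2 h), max_eq_left h]; ring

theorem knight_identity_general (α : ℝ) (u a b : ℝ) :
    (|u - a - b| + (2 * α - 1) * (u - a - b)) - (|u - a| + (2 * α - 1) * (u - a))
      = 2 * (∫ t in a..(a + b),
            ((if u ≤ t then (1:ℝ) else 0) - (if u ≤ 0 then (1:ℝ) else 0)))
        - 2 * (α - (if u ≤ 0 then (1:ℝ) else 0)) * b := by
  rw [integral_sub (monotone_step u).intervalIntegrable intervalIntegrable_const, integral_step,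
    integral_const, smul_eq_mul, sub_sub u a b, abs_sub_eq_two_mul_max_sub,
    abs_sub_eq_two_mul_max_sub]
  ring

/-- Knight-type identity for check-loss differences: for real `u, a, b`,
`ℓ_α(u − a − b) − ℓ_α(u − a) = 2 ∫_a^{a+b} (1{u ≤ t} − 1{u ≤ 0}) dt − 2(α − 1{u ≤ 0}) b`,
where `ℓ_α(q) = |q| + (2α−1)q`. -/
theorem knight_identity (α : ℝ) (hα : α ∈ Set.Ioo (0:ℝ) 1) (u a b : ℝ) :
    (|u - a - b| + (2 * α - 1) * (u - a - b)) - (|u - a| + (2 * α - 1) * (u - a))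
      = 2 * (∫ t in a..(a + b),
            ((if u ≤ t then (1:ℝ) else 0) - (if u ≤ 0 then (1:ℝ) else 0)))
        - 2 * (α - (if u ≤ 0 then (1:ℝ) else 0)) * b :=
  knight_identity_general α u a b
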